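/- There do not exist five distinct vertices a, b, c, d, e ∈ V such that φ(ab) = φ(be), φ(bc) = φ(ac), φ(cd) = φ(bd), φ(de) = φ(ce), and φ(ae) = φ(ad), where φ is the Modified CFLS coloring. -/

import Mathlib

namespace CFLS

/-- A vertex of `K_n` for `n = 2^(m^2)`: `m` blocks, each a string of `m` bits.
`x k` is the `k`-th block `x^(k+1)`, and `x k j` is its `j`-th bit (most significant first). -/
abbrev Vtx (m : ℕ) := Fin m → Fin m → Bool

/-- The `j`-th bit of a bit string (as a total function of `j : ℕ`). -/
def bitAt {N : ℕ} (f : Fin N → Bool) (j : ℕ) : Bool :=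
  if h : j < N then f ⟨j, h⟩ else false

/-- The value of a bit string read as a binary integer, most significant bit first. -/
def strToNat {N : ℕ} (f : Fin N → Bool) : ℕ :=
  ∑ j : Fin N, if f j then 2 ^ (N - 1 - j.val) else 0

/-- The `k`-th block of a vertex (as a total function of `k : ℕ`). -/
def blockAt {m : ℕ} (x : Vtx m) (k : ℕ) : Fin m → Bool :=
  if h : k < m then x ⟨k, h⟩ else fun _ => false

/-- The least block index at which `x` and `y` differ. -/
noncomputable def firstDiffBlock {m : ℕ} (x y : Vtx m) : ℕ :=
  sInf {k | blockAt x k ≠ blockAt y k}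

/-- The position (1-indexed) of the first bit at which two bit strings differ; `0` if equal. -/
noncomputable def firstDiffIdx {N : ℕ} (f g : Fin N → Bool) : ℕ :=
  if f = g then 0 else sInf {j | bitAt f j ≠ bitAt g j} + 1

/-- The value of a vertex read as a binary integer (concatenation of its blocks). -/
def vtxToNat {m : ℕ} (x : Vtx m) : ℕ :=
  ∑ k : Fin m, strToNat (x k) * (2 ^ m) ^ (m - 1 - k.val)

/-- The colors of the Modified CFLS coloring:
`((i, {x^(i), y^(i)}), i_1, …, i_m, δ_1, …, δ_m)`. -/
abbrev Color (m : ℕ) := (ℕ × Set (Fin m → Bool)) × (Fin m → ℕ) × (Fin m → ℤ)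

/-- The Modified CFLS color of the edge `xy` assuming `x ≤ y` as binary integers. -/
noncomputable def phiAux {m : ℕ} (x y : Vtx m) : Color m :=
  ((firstDiffBlock x y,
      {blockAt x (firstDiffBlock x y), blockAt y (firstDiffBlock x y)}),
   fun k => firstDiffIdx (x k) (y k),
   fun k => if strToNat (x k) ≤ strToNat (y k) then (1 : ℤ) else -1)

/-- The Modified CFLS coloring `φ`. -/
noncomputable def phi {m : ℕ} (x y : Vtx m) : Color m :=
  if vtxToNat x ≤ vtxToNat y then phiAux x y else phiAux y x

/-- The ten edges among five vertices. -/
def edgeList {m : ℕ} (a b c d e : Vtx m) : List (Vtx m × Vtx m) :=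
  [(a,b),(a,c),(a,d),(a,e),(b,c),(b,d),(b,e),(c,d),(c,e),(d,e)]

/-- The number of the ten edges among `a,b,c,d,e` receiving color `col` under `φ`. -/
noncomputable def colorCount {m : ℕ} (a b c d e : Vtx m) (col : Color m) : ℕ :=
  ((edgeList a b c d e).map fun p => phi p.1 p.2).countP fun x =>
    @decide (x = col) (Classical.propDecidable _)

/-- Five pairwise distinct vertices. -/
def Distinct5 {m : ℕ} (a b c d e : Vtx m) : Prop :=
  a ≠ b ∧ a ≠ c ∧ a ≠ d ∧ a ≠ e ∧ b ≠ c ∧ b ≠ d ∧ b ≠ e ∧ c ≠ d ∧ c ≠ e ∧ d ≠ e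

/-- `col` appears on some edge among `a,b,c,d,e`. -/
noncomputable def IsAttained {m : ℕ} (a b c d e : Vtx m) (col : Color m) : Prop :=
  colorCount a b c d e col ≠ 0

/-- A 2-2-2-2-2 configuration: five distinct vertices such that `φ` on the ten edges
among them takes exactly five values, each attained on exactly two edges. -/
def IsConfig22222 {m : ℕ} (a b c d e : Vtx m) : Prop :=
  Distinct5 a b c d e ∧
  ∀ col : Color m, colorCount a b c d e col = 0 ∨ colorCount a b c d e col = 2

/-- The color class of `col` is a matching: two vertex-disjoint edges of color `col`. -/
def IsMatchingClass {m : ℕ} (a b c d e : Vtx m) (col : Color m) : Prop :=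
  ∃ p ∈ edgeList a b c d e, ∃ q ∈ edgeList a b c d e,
    phi p.1 p.2 = col ∧ phi q.1 q.2 = col ∧
    p.1 ≠ q.1 ∧ p.1 ≠ q.2 ∧ p.2 ≠ q.1 ∧ p.2 ≠ q.2

/-- The color class of `col` is a path: two distinct edges of color `col` sharing a vertex. -/
def IsPathClass {m : ℕ} (a b c d e : Vtx m) (col : Color m) : Prop :=
  ∃ p ∈ edgeList a b c d e, ∃ q ∈ edgeList a b c d e,
    p ≠ q ∧ phi p.1 p.2 = col ∧ phi q.1 q.2 = col ∧
    (p.1 = q.1 ∨ p.1 = q.2 ∨ p.2 = q.1 ∨ p.2 = q.2)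


/-!
Only the first coordinate `(i, {x^(i), y^(i)})` of a color matters. If the two edges `xy`, `yz`
of a path share it, then `x^(i) ≠ y^(i)` forces `x^(i) = z^(i)`, and `x, z` agree with `y` on all
earlier blocks, so `xz` first differs at a block later than `i`. The five equalities give such
paths `a-b-e`, `b-c-a`, `c-d-b`, `d-e-c`, `e-a-d`, hence the impossible cycle
`i(ab) < i(ae) < i(de) < i(cd) < i(bc) < i(ab)` of first differing blocks.
-/

section FirstDiffBlock

variable {m : ℕ} {x y : Vtx m}

lemma exists_blockAt_ne (h : x ≠ y) : ∃ k, blockAt x k ≠ blockAt y k := by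
  contrapose! h
  funext k
  simpa [blockAt] using h k

lemma firstDiffBlock_comm (x y : Vtx m) : firstDiffBlock x y = firstDiffBlock y x := by
  simp only [firstDiffBlock, ne_comm]

lemma blockAt_firstDiffBlock_ne (h : x ≠ y) :
    blockAt x (firstDiffBlock x y) ≠ blockAt y (firstDiffBlock x y) :=
  Nat.sInf_mem (exists_blockAt_ne h)

lemma blockAt_eq_of_lt_firstDiffBlock {k : ℕ} (hk : k < firstDiffBlock x y) :
    blockAt x k = blockAt y k :=
  not_not.1 (Nat.notMem_of_lt_sInf hk)

lemma lt_firstDiffBlock {i : ℕ} (h : x ≠ y) (hi : ∀ k ≤ i, blockAt x k = blockAt y k) :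
    i < firstDiffBlock x y :=
  lt_of_not_ge fun hle => blockAt_firstDiffBlock_ne h (hi _ hle)

end FirstDiffBlock

section Phi

variable {m : ℕ} {x y z : Vtx m}

lemma phi_fst (x y : Vtx m) :
    (phi x y).1 = (firstDiffBlock x y,
      {blockAt x (firstDiffBlock x y), blockAt y (firstDiffBlock x y)}) := by
  unfold phi phiAux
  split_ifs
  · rfl
  · rw [firstDiffBlock_comm y x, Set.pair_comm]

lemma phi_fst_comm (x y : Vtx m) : (phi x y).1 = (phi y x).1 := by
  rw [phi_fst, phi_fst, firstDiffBlock_comm, Set.pair_comm]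

lemma firstDiffBlock_lt_of_phi_fst_eq (hxy : x ≠ y) (hxz : x ≠ z)
    (h : (phi x y).1 = (phi y z).1) : firstDiffBlock x y < firstDiffBlock x z := by
  rw [phi_fst, phi_fst] at h
  obtain ⟨hi, hblocks⟩ := Prod.ext_iff.1 h
  dsimp only at hi hblocks
  set i := firstDiffBlock x y
  have hxz_i : blockAt x i = blockAt z i := by
    have hx : blockAt x i ∈ ({blockAt y i, blockAt z i} : Set (Fin m → Bool)) := by
      rw [hi, ← hblocks, ← hi]
      exact Set.mem_insert _ _
    exact hx.resolve_left (blockAt_firstDiffBlock_ne hxy)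
  refine lt_firstDiffBlock hxz fun k hk => ?_
  rcases hk.lt_or_eq with hk | rfl
  · exact (blockAt_eq_of_lt_firstDiffBlock hk).trans
      (blockAt_eq_of_lt_firstDiffBlock (hi ▸ hk))
  · exact hxz_i

end Phi

theorem no_rotated_narrow_paths_general (m : ℕ) :
    ¬ ∃ a b c d e : Vtx m, Distinct5 a b c d e ∧
      phi a b = phi b e ∧ phi b c = phi a c ∧ phi c d = phi b d ∧
      phi d e = phi c e ∧ phi a e = phi a d := by
  rintro ⟨a, b, c, d, e, ⟨hab, -, -, hae, hbc, -, -, hcd, -, hde⟩,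
    h_abe, h_bca, h_cdb, h_dec, h_ead⟩
  have k_abe := firstDiffBlock_lt_of_phi_fst_eq hab hae (congrArg Prod.fst h_abe)
  have k_bca := firstDiffBlock_lt_of_phi_fst_eq hbc hab.symm
    (by rw [h_bca, phi_fst_comm])
  have k_cdb := firstDiffBlock_lt_of_phi_fst_eq hcd hbc.symm
    (by rw [h_cdb, phi_fst_comm])
  have k_dec := firstDiffBlock_lt_of_phi_fst_eq hde hcd.symm
    (by rw [h_dec, phi_fst_comm])
  have k_ead := firstDiffBlock_lt_of_phi_fst_eq hae.symm hde.symm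
    (by rw [phi_fst_comm, h_ead])
  simp only [firstDiffBlock_comm b a, firstDiffBlock_comm c b, firstDiffBlock_comm d c,
    firstDiffBlock_comm e a, firstDiffBlock_comm e d] at k_bca k_cdb k_dec k_ead
  omega

/-- The configuration of Figure (E) (rotated narrow paths) is forbidden under the
Modified CFLS coloring. -/
theorem no_rotated_narrow_paths (m : ℕ) (hm : 0 < m) :
    ¬ ∃ a b c d e : Vtx m, Distinct5 a b c d e ∧
      phi a b = phi b e ∧ phi b c = phi a c ∧ phi c d = phi b d ∧
      phi d e = phi c e ∧ phi a e = phi a d :=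
  no_rotated_narrow_paths_general m

end CFLS
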